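/- Let H be a complex Hilbert space, let N be a self-adjoint norm on B(H), and let A ∈ B(H). Then the function f : [0,1] → ℝ given by f(ν) = w_{(N,ν)}(A) is convex and continuous on [0,1], satisfies f(ν) = f(1-ν) for all ν ∈ [0,1], attains its minimum over [0,1] at ν = 1/2, and attains its maximum over [0,1] at ν = 0 and ν = 1. -/

import Mathlib

variable {H : Type*} [NormedAddCommGroup H] [InnerProductSpace ℂ H] [CompleteSpace H]

/-- The operator `ν e^{iθ} A + (1-ν) e^{-iθ} A*`. -/
noncomputable def weightedPart (ν θ : ℝ) (A : H →L[ℂ] H) : H →L[ℂ] H :=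
  ((ν : ℂ) * Complex.exp (θ * Complex.I)) • A +
    (((1 - ν : ℝ) : ℂ) * Complex.exp (-(θ * Complex.I))) • ContinuousLinearMap.adjoint A

/-- The weighted `N`-numerical radius `w_{(N,ν)}(A) = sup_{θ ∈ ℝ} N(ν e^{iθ} A + (1-ν) e^{-iθ} A*)`. -/
noncomputable def wN (N : (H →L[ℂ] H) → ℝ) (ν : ℝ) (A : H →L[ℂ] H) : ℝ :=
  ⨆ θ : ℝ, N (weightedPart ν θ A)

lemma norm_exp_theta (θ : ℝ) : ‖Complex.exp ((θ:ℂ) * Complex.I)‖ = 1 := by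
  rw [Complex.norm_exp_ofReal_mul_I]

lemma norm_exp_theta' (θ : ℝ) : ‖Complex.exp (-((θ:ℂ) * Complex.I))‖ = 1 := by
  have : -((θ:ℂ) * Complex.I) = ((-θ : ℝ) : ℂ) * Complex.I := by push_cast; ring
  rw [this, norm_exp_theta]

lemma conj_exp_theta (θ : ℝ) :
    (starRingEnd ℂ) (Complex.exp ((θ:ℂ) * Complex.I)) = Complex.exp (-((θ:ℂ) * Complex.I)) := by
  rw [← Complex.exp_conj, map_mul, Complex.conj_ofReal, Complex.conj_I]; ring_nf

lemma conj_exp_theta' (θ : ℝ) :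
    (starRingEnd ℂ) (Complex.exp (-((θ:ℂ) * Complex.I))) = Complex.exp ((θ:ℂ) * Complex.I) := by
  rw [← Complex.exp_conj, map_neg, map_mul, Complex.conj_ofReal, Complex.conj_I]; ring_nf

lemma wp_bound (N : (H →L[ℂ] H) → ℝ)
    (hN_smul : ∀ (α : ℂ) (A : H →L[ℂ] H), N (α • A) = ‖α‖ * N A)
    (hN_add : ∀ A B : H →L[ℂ] H, N (A + B) ≤ N A + N B)
    (hN_sa : ∀ A : H →L[ℂ] H, N (ContinuousLinearMap.adjoint A) = N A)
    (ν θ : ℝ) (A : H →L[ℂ] H) :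
    N (weightedPart ν θ A) ≤ (|ν| + |1 - ν|) * N A := by
  have h1 : ‖(ν : ℂ) * Complex.exp ((θ:ℂ) * Complex.I)‖ = |ν| := by
    rw [norm_mul, norm_exp_theta, Complex.norm_real, Real.norm_eq_abs, mul_one]
  have h2 : ‖((1 - ν : ℝ) : ℂ) * Complex.exp (-((θ:ℂ) * Complex.I))‖ = |1 - ν| := by
    rw [norm_mul, norm_exp_theta', Complex.norm_real, Real.norm_eq_abs, mul_one]
  calc N (weightedPart ν θ A) ≤ _ + _ := hN_add _ _
    _ = |ν| * N A + |1 - ν| * N (ContinuousLinearMap.adjoint A) := by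
        rw [hN_smul, hN_smul, h1, h2]
    _ = (|ν| + |1 - ν|) * N A := by rw [hN_sa]; ring

lemma wp_bdd (N : (H →L[ℂ] H) → ℝ)
    (hN_smul : ∀ (α : ℂ) (A : H →L[ℂ] H), N (α • A) = ‖α‖ * N A)
    (hN_add : ∀ A B : H →L[ℂ] H, N (A + B) ≤ N A + N B)
    (hN_sa : ∀ A : H →L[ℂ] H, N (ContinuousLinearMap.adjoint A) = N A)
    (ν : ℝ) (A : H →L[ℂ] H) :
    BddAbove (Set.range fun θ : ℝ => N (weightedPart ν θ A)) := by
  refine ⟨(|ν| + |1 - ν|) * N A, ?_⟩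
  rintro x ⟨θ, rfl⟩
  exact wp_bound N hN_smul hN_add hN_sa ν θ A

lemma wp_affine (a ν μ θ : ℝ) (A : H →L[ℂ] H) :
    weightedPart (a * ν + (1 - a) * μ) θ A
      = (a : ℂ) • weightedPart ν θ A + ((1 - a : ℝ) : ℂ) • weightedPart μ θ A := by
  simp only [weightedPart]
  push_cast
  module

lemma wp_sub (ν μ θ : ℝ) (A : H →L[ℂ] H) :
    weightedPart ν θ A - weightedPart μ θ A
      = (((ν - μ : ℝ) : ℂ) * Complex.exp ((θ:ℂ) * Complex.I)) • A
        + (((μ - ν : ℝ) : ℂ) * Complex.exp (-((θ:ℂ) * Complex.I))) •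
            ContinuousLinearMap.adjoint A := by
  simp only [weightedPart]
  push_cast
  module

lemma wp_adjoint (ν θ : ℝ) (A : H →L[ℂ] H) :
    ContinuousLinearMap.adjoint (weightedPart ν θ A) = weightedPart (1 - ν) θ A := by
  rw [← ContinuousLinearMap.star_eq_adjoint]
  simp only [weightedPart, ← ContinuousLinearMap.star_eq_adjoint, star_add, star_smul, star_star]
  rw [add_comm]
  congr 1
  · congr 1
    rw [Complex.star_def, map_mul, Complex.conj_ofReal, conj_exp_theta']
  · rw [show ((1 - (1 - ν) : ℝ) : ℂ) = (ν : ℂ) by push_cast; ring]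
    congr 1
    rw [Complex.star_def, map_mul, Complex.conj_ofReal, conj_exp_theta]

theorem stmt6 (N : (H →L[ℂ] H) → ℝ)
    (hN_nonneg : ∀ A, 0 ≤ N A)
    (hN_eq_zero : ∀ A, N A = 0 ↔ A = 0)
    (hN_smul : ∀ (α : ℂ) (A), N (α • A) = ‖α‖ * N A)
    (hN_add : ∀ A B, N (A + B) ≤ N A + N B)
    (hN_sa : ∀ A, N (ContinuousLinearMap.adjoint A) = N A)
    (A : H →L[ℂ] H) :
    ConvexOn ℝ (Set.Icc (0 : ℝ) 1) (fun ν => wN N ν A) ∧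
    ContinuousOn (fun ν => wN N ν A) (Set.Icc (0 : ℝ) 1) ∧
    (∀ ν ∈ Set.Icc (0 : ℝ) 1, wN N ν A = wN N (1 - ν) A) ∧
    (∀ ν ∈ Set.Icc (0 : ℝ) 1, wN N (1 / 2) A ≤ wN N ν A) ∧
    (∀ ν ∈ Set.Icc (0 : ℝ) 1, wN N ν A ≤ wN N 0 A ∧ wN N ν A ≤ wN N 1 A) := by
  have bdd : ∀ ν : ℝ, BddAbove (Set.range fun θ : ℝ => N (weightedPart ν θ A)) :=
    fun ν => wp_bdd N hN_smul hN_add hN_sa ν A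
  -- symmetry (for all real ν)
  have hsym : ∀ ν : ℝ, wN N ν A = wN N (1 - ν) A := by
    intro ν
    unfold wN
    refine iSup_congr fun θ => ?_
    rw [← wp_adjoint ν θ A, hN_sa]
  -- convexity (on all of ℝ, then restrict)
  have hconv : ConvexOn ℝ (Set.Icc (0:ℝ) 1) (fun ν => wN N ν A) := by
    refine ⟨convex_Icc 0 1, ?_⟩
    intro ν _ μ _ a b ha hb hab
    have hb' : b = 1 - a := by linarith
    subst hb'
    simp only [smul_eq_mul]
    refine ciSup_le fun θ => ?_
    rw [wp_affine a ν μ θ A]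
    have h1 : ‖(a : ℂ)‖ = a := by rw [Complex.norm_real, Real.norm_eq_abs, abs_of_nonneg ha]
    have h2 : ‖((1 - a : ℝ) : ℂ)‖ = 1 - a := by
      rw [Complex.norm_real, Real.norm_eq_abs, abs_of_nonneg hb]
    calc N _ ≤ N ((a : ℂ) • weightedPart ν θ A) + N (((1 - a : ℝ) : ℂ) • weightedPart μ θ A) :=
          hN_add _ _
      _ = a * N (weightedPart ν θ A) + (1 - a) * N (weightedPart μ θ A) := by
          rw [hN_smul, hN_smul, h1, h2]
      _ ≤ a * wN N ν A + (1 - a) * wN N μ A := by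
          gcongr
          · exact le_ciSup (bdd ν) θ
          · exact le_ciSup (bdd μ) θ
  -- Lipschitz estimate
  have hlip : ∀ ν μ : ℝ, wN N ν A ≤ wN N μ A + 2 * N A * |ν - μ| := by
    intro ν μ
    refine ciSup_le fun θ => ?_
    have key : N (weightedPart ν θ A) ≤ N (weightedPart μ θ A)
        + N (weightedPart ν θ A - weightedPart μ θ A) := by
      have := hN_add (weightedPart μ θ A) (weightedPart ν θ A - weightedPart μ θ A)
      simpa using this
    have hdiff : N (weightedPart ν θ A - weightedPart μ θ A) ≤ 2 * N A * |ν - μ| := by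
      rw [wp_sub]
      have h1 : ‖((ν - μ : ℝ) : ℂ) * Complex.exp ((θ:ℂ) * Complex.I)‖ = |ν - μ| := by
        rw [norm_mul, norm_exp_theta, Complex.norm_real, Real.norm_eq_abs, mul_one]
      have h2 : ‖((μ - ν : ℝ) : ℂ) * Complex.exp (-((θ:ℂ) * Complex.I))‖ = |ν - μ| := by
        rw [norm_mul, norm_exp_theta', Complex.norm_real, Real.norm_eq_abs, mul_one,
          abs_sub_comm]
      calc N _ ≤ _ + _ := hN_add _ _
        _ = |ν - μ| * N A + |ν - μ| * N (ContinuousLinearMap.adjoint A) := by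
            rw [hN_smul, hN_smul, h1, h2]
        _ = 2 * N A * |ν - μ| := by rw [hN_sa]; ring
    calc N (weightedPart ν θ A)
        ≤ N (weightedPart μ θ A) + 2 * N A * |ν - μ| := by linarith
      _ ≤ wN N μ A + 2 * N A * |ν - μ| := by
          gcongr; exact le_ciSup (bdd μ) θ
  have hcont : ContinuousOn (fun ν => wN N ν A) (Set.Icc (0:ℝ) 1) := by
    have hL : LipschitzWith (Real.toNNReal (2 * N A)) (fun ν => wN N ν A) := by
      refine LipschitzWith.of_dist_le_mul fun ν μ => ?_
      rw [Real.dist_eq, Real.dist_eq,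
        Real.coe_toNNReal _ (by have := hN_nonneg A; positivity)]
      rw [abs_sub_le_iff]
      constructor
      · have := hlip ν μ; linarith
      · have := hlip μ ν; rw [abs_sub_comm]; linarith
    exact hL.continuous.continuousOn
  refine ⟨hconv, hcont, fun ν _ => hsym ν, ?_, ?_⟩
  · intro ν hν
    obtain ⟨h0, h1⟩ := hν
    have hν' : (1 - ν) ∈ Set.Icc (0:ℝ) 1 := ⟨by linarith, by linarith⟩
    have := hconv.2 (Set.mem_Icc.mpr ⟨h0, h1⟩) hν' (by norm_num : (0:ℝ) ≤ 1/2)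
      (by norm_num : (0:ℝ) ≤ 1/2) (by norm_num)
    simp only [smul_eq_mul] at this
    have heq : 1/2 * ν + 1/2 * (1 - ν) = (1/2 : ℝ) := by ring
    rw [heq] at this
    rw [← hsym ν] at this
    linarith
  · intro ν hν
    obtain ⟨h0, h1⟩ := hν
    have := hconv.2 (Set.left_mem_Icc.mpr (by norm_num)) (Set.right_mem_Icc.mpr (by norm_num))
      (by linarith : (0:ℝ) ≤ 1 - ν) h0 (by ring)
    simp only [smul_eq_mul, mul_zero, mul_one, zero_add] at this
    have h01 : wN N (0:ℝ) A = wN N (1:ℝ) A := by simpa using hsym 0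
    have hsum : (1 - ν) * wN N (0:ℝ) A + ν * wN N (1:ℝ) A = wN N (0:ℝ) A := by
      rw [h01]; ring
    constructor
    · linarith
    · rw [← h01]; linarith
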